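/- arXiv:2306.06655 — 6 statements merged into one kernel-verified Lean document; each statement's English description precedes it below -/
import Mathlib

section
/- If G is a K_{r+1}-free graph on n vertices, then its number of edges is at most that of the Turán graph T_r(n), the complete r-partite graph with parts as equal as possible. -/
/-- **Turán's theorem** (edge count form): a `K_{r+1}`-free graph on `n` vertices has
at most as many edges as the Turán graph `T_r(n)`. -/
theorem turan_edge_bound (n r : ℕ) (G : SimpleGraph (Fin n)) [DecidableRel G.Adj]
    (hG : G.CliqueFree (r + 1)) :
    G.edgeFinset.card ≤ (SimpleGraph.turanGraph n r).edgeFinset.card := by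
  rcases Nat.eq_zero_or_pos r with rfl | hr
  · -- Mathlib's convention makes `turanGraph n 0` the complete graph.
    have hle : G ≤ SimpleGraph.turanGraph n 0 := SimpleGraph.turanGraph_zero ▸ le_top
    exact Finset.card_le_card (SimpleGraph.edgeFinset_mono hle)
  · exact (SimpleGraph.isTuranMaximal_turanGraph hr).2 hG
end

section
/- If G is a graph on n vertices with clique number ω(G), then the largest eigenvalue of the adjacency matrix of G is at most (1 - 1/ω(G))·n. -/
open Matrix Finset

variable {n : ℕ} (G : SimpleGraph (Fin n)) [DecidableRel G.Adj]

noncomputable def Qf (y : Fin n → ℝ) : ℝ := ∑ i, ∑ j, G.adjMatrix ℝ i j * (y i * y j)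

lemma sum_ite_two (f : Fin n → ℝ) (i j : Fin n) (hij : i ≠ j) (a b : ℝ) :
    ∑ l, f l * (if l = i then a else if l = j then b else 0) = f i * a + f j * b := by
  have : ∀ l, f l * (if l = i then a else if l = j then b else 0)
      = (if l = i then f l * a else 0) + (if l = j then f l * b else 0) := by
    intro l
    split_ifs with h1 h2 <;> simp_all <;> ring
  simp only [this, Finset.sum_add_distrib, Finset.sum_ite_eq' univ, mem_univ, if_true]

lemma ms_clique (y : Fin n → ℝ) (hy : ∀ i, 0 ≤ y i)
    (hc : G.IsClique ((univ.filter fun i => y i ≠ 0 : Finset (Fin n)) : Set (Fin n))) :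
    Qf G y ≤ (1 - 1 / (G.cliqueNum : ℝ)) * (∑ i, y i) ^ 2 := by
  set s : Finset (Fin n) := univ.filter fun i => y i ≠ 0 with hs
  have hmem : ∀ i, i ∈ s ↔ y i ≠ 0 := by intro i; simp [hs]
  have hsum : ∑ i, y i = ∑ i ∈ s, y i := (Finset.sum_filter_ne_zero univ).symm
  -- restrict the quadratic form to s
  have h1 : Qf G y = ∑ i ∈ s, ∑ j ∈ s, G.adjMatrix ℝ i j * (y i * y j) := by
    rw [Qf]
    rw [← Finset.sum_subset (Finset.subset_univ s)]
    · refine Finset.sum_congr rfl fun i _ => ?_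
      rw [← Finset.sum_subset (Finset.subset_univ s)]
      intro j _ hj
      have : y j = 0 := by by_contra h; exact hj ((hmem j).mpr h)
      simp [this]
    · intro i _ hi
      have : y i = 0 := by by_contra h; exact hi ((hmem i).mpr h)
      simp [this]
  -- on a clique the form is (sum)^2 - sum of squares
  have h2 : ∑ i ∈ s, ∑ j ∈ s, G.adjMatrix ℝ i j * (y i * y j)
      = (∑ i ∈ s, y i) ^ 2 - ∑ i ∈ s, y i ^ 2 := by
    have inner : ∀ i ∈ s, ∑ j ∈ s, G.adjMatrix ℝ i j * (y i * y j)
        = (∑ j ∈ s, y i * y j) - y i * y i := by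
      intro i hi
      have : ∀ j ∈ s, G.adjMatrix ℝ i j * (y i * y j)
          = y i * y j - (if j = i then y i * y j else 0) := by
        intro j hj
        by_cases h : j = i
        · subst h; simp
        · have hadj : G.Adj i j := hc (Finset.mem_coe.mpr hi) (Finset.mem_coe.mpr hj) (Ne.symm h)
          simp [hadj, h]
      rw [Finset.sum_congr rfl this, Finset.sum_sub_distrib,
        Finset.sum_ite_eq' s i (fun j => y i * y j), if_pos hi]
    rw [Finset.sum_congr rfl inner, Finset.sum_sub_distrib, sq, Finset.sum_mul_sum]
    congr 1
    exact Finset.sum_congr rfl fun i _ => (sq (y i)).symm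
  rw [h1, h2, hsum]
  have hcard : (#s : ℝ) ≤ (G.cliqueNum : ℝ) := by
    exact_mod_cast SimpleGraph.IsClique.card_le_cliqueNum (tc := hc)
  have hcheb : (∑ i ∈ s, y i) ^ 2 ≤ (#s : ℝ) * ∑ i ∈ s, y i ^ 2 := by
    exact_mod_cast sq_sum_le_card_mul_sum_sq (s := s) (f := y)
  have hsqnn : (0:ℝ) ≤ ∑ i ∈ s, y i ^ 2 := Finset.sum_nonneg fun i _ => sq_nonneg _
  have key : (1 / (G.cliqueNum : ℝ)) * (∑ i ∈ s, y i) ^ 2 ≤ ∑ i ∈ s, y i ^ 2 := by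
    rcases Nat.eq_zero_or_pos G.cliqueNum with h0 | hpos
    · simp [h0]; exact hsqnn
    · have hw : (0:ℝ) < (G.cliqueNum : ℝ) := by exact_mod_cast hpos
      rw [one_div, inv_mul_le_iff₀ hw]
      exact hcheb.trans (mul_le_mul_of_nonneg_right hcard hsqnn)
  nlinarith [key]

lemma shift (y : Fin n → ℝ) (hy : ∀ i, 0 ≤ y i) (i j : Fin n) (hij : i ≠ j)
    (hnadj : ¬ G.Adj i j) (hyi : y i ≠ 0) (hyj : y j ≠ 0)
    (hS : ∑ k, G.adjMatrix ℝ j k * y k ≤ ∑ k, G.adjMatrix ℝ i k * y k) :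
    ∃ y' : Fin n → ℝ, (∀ k, 0 ≤ y' k) ∧ (∀ k, y' k ≠ 0 → (y k ≠ 0 ∧ k ≠ j)) ∧
      (∑ k, y' k = ∑ k, y k) ∧ Qf G y ≤ Qf G y' := by
  set A : Matrix (Fin n) (Fin n) ℝ := G.adjMatrix ℝ with hA
  have hsymm : ∀ k l, A k l = A l k := fun k l => by
    simp [hA, SimpleGraph.adjMatrix_apply, G.adj_comm]
  set c : Fin n → ℝ := fun k => if k = i then y j else if k = j then -(y j) else 0 with hc
  refine ⟨fun k => y k + c k, ?_, ?_, ?_, ?_⟩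
  · intro k
    simp only [hc]
    split_ifs with h1 h2
    · rw [h1]; have := hy i; have := hy j; linarith
    · rw [h2]; simp
    · simpa using hy k
  · intro k hk
    simp only [hc] at hk
    split_ifs at hk with h1 h2
    · exact ⟨h1 ▸ hyi, h1 ▸ hij⟩
    · rw [h2] at hk; simp at hk
    · exact ⟨by simpa using hk, h2⟩
  · rw [Finset.sum_add_distrib]
    have := sum_ite_two (fun _ => (1:ℝ)) i j hij (y j) (-(y j))
    simp only [one_mul] at this
    rw [show (∑ k, c k) = ∑ l, (if l = i then y j else if l = j then -(y j) else 0) from rfl,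
      this]
    ring
  · -- expansion of the quadratic form
    have e1 : Qf G (fun k => y k + c k) = Qf G y +
        ((∑ k, ∑ l, A k l * (y k * c l)) + ((∑ k, ∑ l, A k l * (c k * y l)) +
          (∑ k, ∑ l, A k l * (c k * c l)))) := by
      simp only [Qf, ← hA]
      rw [Finset.sum_congr rfl (fun k _ => Finset.sum_congr rfl fun l _ =>
        show A k l * ((y k + c k) * (y l + c l)) = A k l * (y k * y l) +
          (A k l * (y k * c l) + (A k l * (c k * y l) + A k l * (c k * c l))) by ring)]
      simp only [Finset.sum_add_distrib]
    have inner1 : ∀ k, ∑ l, A k l * (y k * c l)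
        = A k i * y k * y j + A k j * y k * (-(y j)) := by
      intro k
      calc ∑ l, A k l * (y k * c l)
          = ∑ l, (A k l * y k) * (if l = i then y j else if l = j then -(y j) else 0) :=
            Finset.sum_congr rfl fun l _ => by simp only [hc]; ring
        _ = _ := sum_ite_two (fun l => A k l * y k) i j hij (y j) (-(y j))
    have hB1 : (∑ k, ∑ l, A k l * (y k * c l))
        = y j * (∑ k, A i k * y k) - y j * (∑ k, A j k * y k) := by
      rw [Finset.sum_congr rfl fun k _ => inner1 k, Finset.sum_add_distrib,
        Finset.mul_sum, Finset.mul_sum, sub_eq_add_neg, ← Finset.sum_neg_distrib]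
      congr 1
      · exact Finset.sum_congr rfl fun k _ => by rw [hsymm k i]; ring
      · exact Finset.sum_congr rfl fun k _ => by rw [hsymm k j]; ring
    have hB2 : (∑ k, ∑ l, A k l * (c k * y l))
        = y j * (∑ k, A i k * y k) - y j * (∑ k, A j k * y k) := by
      rw [Finset.sum_comm]
      have inner2 : ∀ l, ∑ k, A k l * (c k * y l)
          = A i l * y l * y j + A j l * y l * (-(y j)) := by
        intro l
        calc ∑ k, A k l * (c k * y l)
            = ∑ k, (A k l * y l) * (if k = i then y j else if k = j then -(y j) else 0) :=
              Finset.sum_congr rfl fun k _ => by simp only [hc]; ring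
          _ = _ := sum_ite_two (fun k => A k l * y l) i j hij (y j) (-(y j))
      rw [Finset.sum_congr rfl fun l _ => inner2 l, Finset.sum_add_distrib,
        Finset.mul_sum, Finset.mul_sum, sub_eq_add_neg, ← Finset.sum_neg_distrib]
      congr 1
      · exact Finset.sum_congr rfl fun k _ => by ring
      · exact Finset.sum_congr rfl fun k _ => by ring
    have hB3 : (∑ k, ∑ l, A k l * (c k * c l)) = 0 := by
      have inner3 : ∀ k, ∑ l, A k l * (c k * c l)
          = A k i * c k * y j + A k j * c k * (-(y j)) := by
        intro k
        calc ∑ l, A k l * (c k * c l)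
            = ∑ l, (A k l * c k) * (if l = i then y j else if l = j then -(y j) else 0) :=
              Finset.sum_congr rfl fun l _ => by simp only [hc]; ring
          _ = _ := sum_ite_two (fun l => A k l * c k) i j hij (y j) (-(y j))
      rw [Finset.sum_congr rfl fun k _ => inner3 k]
      have : ∀ k, A k i * c k * y j + A k j * c k * (-(y j))
          = (A k i * y j - A k j * y j) * (if k = i then y j else if k = j then -(y j) else 0) := by
        intro k; simp only [hc]; ring
      rw [Finset.sum_congr rfl fun k _ => this k]
      have h4 := sum_ite_two (fun k => A k i * y j - A k j * y j) i j hij (y j) (-(y j))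
      rw [h4]
      have hii : A i i = 0 := by simp [hA]
      have hjj : A j j = 0 := by simp [hA]
      have hij0 : A i j = 0 := by simp [hA, hnadj]
      have hji0 : A j i = 0 := by rw [hsymm j i, hij0]
      rw [hii, hjj, hij0, hji0]; ring
    rw [e1, hB1, hB2, hB3]
    have hyj' : 0 ≤ y j := hy j
    nlinarith [mul_nonneg hyj' (sub_nonneg.mpr hS)]

lemma ms_aux : ∀ m : ℕ, ∀ y : Fin n → ℝ, (∀ i, 0 ≤ y i) →
    (univ.filter fun i => y i ≠ 0).card ≤ m →
    Qf G y ≤ (1 - 1 / (G.cliqueNum : ℝ)) * (∑ i, y i) ^ 2 := by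
  intro m
  induction m with
  | zero =>
    intro y hy hcard
    refine ms_clique G y hy ?_
    have : (univ.filter fun i => y i ≠ 0) = ∅ :=
      Finset.card_eq_zero.mp (Nat.le_zero.mp hcard)
    rw [this]; simp
  | succ m ih =>
    intro y hy hcard
    by_cases hcl : G.IsClique ((univ.filter fun i => y i ≠ 0 : Finset (Fin n)) : Set (Fin n))
    · exact ms_clique G y hy hcl
    · rw [SimpleGraph.isClique_iff, Set.Pairwise] at hcl
      push_neg at hcl
      obtain ⟨i, hi, j, hj, hij, hnadj⟩ := hcl
      have hyi : y i ≠ 0 := by simpa using hi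
      have hyj : y j ≠ 0 := by simpa using hj
      have main : ∀ a b : Fin n, a ≠ b → ¬G.Adj a b → y a ≠ 0 → y b ≠ 0 →
          (∑ k, G.adjMatrix ℝ b k * y k ≤ ∑ k, G.adjMatrix ℝ a k * y k) →
          Qf G y ≤ (1 - 1 / (G.cliqueNum : ℝ)) * (∑ i, y i) ^ 2 := by
        intro a b hab hnadj' hya hyb hS
        obtain ⟨y', h0, hsupp, hsum, hQ⟩ := shift G y hy a b hab hnadj' hya hyb hS
        have hbmem : b ∈ univ.filter fun k => y k ≠ 0 := by simp [hyb]
        have hsub : (univ.filter fun k => y' k ≠ 0) ⊆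
            (univ.filter fun k => y k ≠ 0).erase b := by
          intro k hk
          rw [Finset.mem_filter] at hk
          obtain ⟨h1, h2⟩ := hsupp k hk.2
          exact Finset.mem_erase.mpr ⟨h2, by simp [h1]⟩
        have hcard' : (univ.filter fun k => y' k ≠ 0).card ≤ m := by
          have := Finset.card_le_card hsub
          rw [Finset.card_erase_of_mem hbmem] at this
          omega
        calc Qf G y ≤ Qf G y' := hQ
          _ ≤ (1 - 1 / (G.cliqueNum : ℝ)) * (∑ i, y' i) ^ 2 := ih y' h0 hcard'
          _ = _ := by rw [hsum]
      rcases le_total (∑ k, G.adjMatrix ℝ j k * y k) (∑ k, G.adjMatrix ℝ i k * y k) with h | h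
      · exact main i j hij hnadj hyi hyj h
      · exact main j i hij.symm (fun hadj => hnadj hadj.symm) hyj hyi h

theorem aux_adj_bound (μ : ℝ) (hμ : μ ∈ spectrum ℝ (G.adjMatrix ℝ)) :
    μ ≤ (1 - 1 / (G.cliqueNum : ℝ)) * n := by
  obtain ⟨v, hv, hveq⟩ : ∃ v : Fin n → ℝ, v ≠ 0 ∧ (G.adjMatrix ℝ).mulVec v = μ • v := by
    rw [spectrum.mem_iff, Matrix.isUnit_iff_isUnit_det, isUnit_iff_ne_zero, not_not,
      ← Matrix.exists_mulVec_eq_zero_iff] at hμ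
    obtain ⟨v, hv, hveq⟩ := hμ
    refine ⟨v, hv, ?_⟩
    have h1 : (algebraMap ℝ (Matrix (Fin n) (Fin n) ℝ)) μ
        = μ • (1 : Matrix (Fin n) (Fin n) ℝ) := by
      simp [Algebra.algebraMap_eq_smul_one]
    rw [h1, Matrix.sub_mulVec, Matrix.smul_mulVec, Matrix.one_mulVec, sub_eq_zero] at hveq
    exact hveq.symm
  set A : Matrix (Fin n) (Fin n) ℝ := G.adjMatrix ℝ with hA
  set y : Fin n → ℝ := fun i => |v i| with hy
  have hAnn : ∀ i j, 0 ≤ A i j := by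
    intro i j; simp only [hA, SimpleGraph.adjMatrix_apply]; split_ifs <;> norm_num
  -- positive square sum
  obtain ⟨i0, hi0⟩ := Function.ne_iff.mp hv
  have hi0' : v i0 ≠ 0 := by simpa using hi0
  have hS : 0 < ∑ i, v i ^ 2 :=
    Finset.sum_pos' (fun i _ => sq_nonneg _) ⟨i0, Finset.mem_univ _, by positivity⟩
  have hSy : ∑ i, y i ^ 2 = ∑ i, v i ^ 2 :=
    Finset.sum_congr rfl fun i _ => by simp [hy, sq_abs]
  -- Rayleigh identity
  have key : μ * ∑ i, v i ^ 2 = ∑ i, ∑ j, A i j * (v i * v j) := by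
    have : ∀ i, v i * (A.mulVec v) i = v i * (μ * v i) := by
      intro i; rw [hveq]; simp
    calc μ * ∑ i, v i ^ 2 = ∑ i, v i * (μ * v i) := by
          rw [Finset.mul_sum]; exact Finset.sum_congr rfl fun i _ => by ring
      _ = ∑ i, v i * (A.mulVec v) i := (Finset.sum_congr rfl fun i _ => (this i).symm)
      _ = ∑ i, ∑ j, A i j * (v i * v j) := by
          refine Finset.sum_congr rfl fun i _ => ?_
          rw [Matrix.mulVec, dotProduct, Finset.mul_sum]
          exact Finset.sum_congr rfl fun j _ => by ring
  have habs : ∑ i, ∑ j, A i j * (v i * v j) ≤ Qf G y := by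
    refine Finset.sum_le_sum fun i _ => Finset.sum_le_sum fun j _ => ?_
    have : v i * v j ≤ y i * y j := by
      rw [hy]; calc v i * v j ≤ |v i * v j| := le_abs_self _
        _ = |v i| * |v j| := abs_mul _ _
    exact mul_le_mul_of_nonneg_left this (hAnn i j)
  have hms : Qf G y ≤ (1 - 1 / (G.cliqueNum : ℝ)) * (∑ i, y i) ^ 2 :=
    ms_aux G _ y (fun i => abs_nonneg _) le_rfl
  -- clique number is at least 1
  have hω : 1 ≤ G.cliqueNum := by
    have hcl : G.IsClique (({i0} : Finset (Fin n)) : Set (Fin n)) := by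
      simp only [Finset.coe_singleton]
      exact Set.pairwise_singleton _ _
    have := SimpleGraph.IsClique.card_le_cliqueNum (tc := hcl)
    simpa using this
  have hωnn : (0:ℝ) ≤ 1 - 1 / (G.cliqueNum : ℝ) := by
    have h1 : (1:ℝ) ≤ (G.cliqueNum : ℝ) := by exact_mod_cast hω
    have : 1 / (G.cliqueNum : ℝ) ≤ 1 := by
      rw [div_le_one (by linarith)]; exact h1
    linarith
  have hcheb : (∑ i, y i) ^ 2 ≤ (n : ℝ) * ∑ i, y i ^ 2 := by
    have h := sq_sum_le_card_mul_sum_sq (s := (univ : Finset (Fin n))) (f := y)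
    simpa using h
  have final : μ * (∑ i, v i ^ 2) ≤ ((1 - 1 / (G.cliqueNum : ℝ)) * n) * (∑ i, v i ^ 2) := by
    calc μ * (∑ i, v i ^ 2) = ∑ i, ∑ j, A i j * (v i * v j) := key
      _ ≤ Qf G y := habs
      _ ≤ (1 - 1 / (G.cliqueNum : ℝ)) * (∑ i, y i) ^ 2 := hms
      _ ≤ (1 - 1 / (G.cliqueNum : ℝ)) * ((n : ℝ) * ∑ i, y i ^ 2) :=
          mul_le_mul_of_nonneg_left hcheb hωnn
      _ = ((1 - 1 / (G.cliqueNum : ℝ)) * n) * (∑ i, v i ^ 2) := by rw [hSy]; ring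
  exact le_of_mul_le_mul_right final hS

/-- The largest adjacency eigenvalue of a graph `G` on `n` vertices is at most
`(1 - 1/ω(G)) * n`, where `ω(G)` is the clique number. -/
theorem adj_eigenvalue_le_cliqueNum_bound (n : ℕ) (G : SimpleGraph (Fin n))
    [DecidableRel G.Adj] (μ : ℝ) (hμ : μ ∈ spectrum ℝ (G.adjMatrix ℝ)) :
    μ ≤ (1 - 1 / (G.cliqueNum : ℝ)) * n := by
  exact aux_adj_bound G μ hμ
end

section
/- Let G be a graph of order n with minimum degree δ and e edges. Then the largest adjacency eigenvalue of G satisfies λ₁(G) ≤ (δ - 1 + √(8e - 4δn + (δ+1)²))/2. -/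
open Matrix Finset

/-- Hong-type bound: for a graph `G` on `n` vertices with minimum degree `δ` and `e` edges,
every adjacency eigenvalue is at most `(δ - 1 + √(8e - 4δn + (δ+1)²))/2`. -/
theorem adj_eigenvalue_le_hong_bound (n : ℕ) (G : SimpleGraph (Fin n))
    [DecidableRel G.Adj] [Nonempty (Fin n)] (μ : ℝ) (hμ : μ ∈ spectrum ℝ (G.adjMatrix ℝ)) :
    μ ≤ ((G.minDegree : ℝ) - 1 +
      Real.sqrt (8 * G.edgeFinset.card - 4 * G.minDegree * n + (G.minDegree + 1) ^ 2)) / 2 := by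
  classical
  set δ : ℝ := (G.minDegree : ℝ) with hδdef
  set E : ℝ := (G.edgeFinset.card : ℝ) with hEdef
  have hδ0 : 0 ≤ δ := Nat.cast_nonneg _
  -- degree sum facts
  have hdegsum : ∑ v : Fin n, (G.degree v : ℝ) = 2 * E := by
    rw [hEdef]
    exact_mod_cast congrArg (Nat.cast : ℕ → ℝ) G.sum_degrees_eq_twice_card_edges
  have hδle : ∀ v : Fin n, δ ≤ (G.degree v : ℝ) := fun v => by
    rw [hδdef]; exact_mod_cast G.minDegree_le_degree v
  have h2E : δ * n ≤ 2 * E := by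
    calc δ * n = ∑ _v : Fin n, δ := by simp [mul_comm]
    _ ≤ ∑ v : Fin n, (G.degree v : ℝ) := Finset.sum_le_sum fun v _ => hδle v
    _ = 2 * E := hdegsum
  -- the square root argument is at least (δ+1)²
  have hargnn : (0:ℝ) ≤ 8 * E - 4 * δ * n + (δ + 1) ^ 2 := by nlinarith
  have hsqrt_ge : δ + 1 ≤ Real.sqrt (8 * E - 4 * δ * n + (δ + 1) ^ 2) := by
    rw [Real.le_sqrt (by linarith) hargnn]
    nlinarith
  -- trivial case μ ≤ δ
  rcases le_or_gt μ δ with hcase | hcase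
  · linarith
  -- main case: μ > δ ≥ 0
  have hμ0 : 0 < μ := lt_of_le_of_lt hδ0 hcase
  -- extract an eigenvector
  rw [← AlgEquiv.spectrum_eq (Matrix.toLinAlgEquiv' : Matrix (Fin n) (Fin n) ℝ ≃ₐ[ℝ] _),
    ← Module.End.hasEigenvalue_iff_mem_spectrum] at hμ
  obtain ⟨x, hx⟩ := hμ.exists_hasEigenvector
  have hx0 : x ≠ 0 := hx.right
  have hxe : (G.adjMatrix ℝ).mulVec x = μ • x := by
    have h := hx.apply_eq_smul
    simpa [Matrix.toLinAlgEquiv'_apply] using h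
  -- the absolute value vector
  set y : Fin n → ℝ := fun v => |x v| with hydef
  have hy0 : ∀ v, 0 ≤ y v := fun v => abs_nonneg _
  obtain ⟨u, hu⟩ := Finite.exists_max y
  set m : ℝ := y u with hmdef
  have hm0 : 0 < m := by
    rcases lt_or_ge 0 m with h | h
    · exact h
    · exfalso; apply hx0; funext v
      have := hu v
      have h1 : y v ≤ 0 := le_trans this h
      have := abs_nonneg (x v)
      have : |x v| = 0 := le_antisymm h1 (hy0 v)
      simpa using this
  -- key pointwise inequality: μ * y v ≤ ∑ w ∈ N(v), y w
  have hkey : ∀ v, μ * y v ≤ ∑ w ∈ G.neighborFinset v, y w := by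
    intro v
    have h1 : ((G.adjMatrix ℝ).mulVec x) v = μ * x v := by
      rw [hxe]; simp
    have h2 : ((G.adjMatrix ℝ).mulVec x) v = ∑ w ∈ G.neighborFinset v, x w := by
      rw [SimpleGraph.adjMatrix_mulVec_apply]
    have h3 : |μ * x v| = μ * y v := by
      rw [abs_mul, abs_of_pos hμ0]
    calc μ * y v = |μ * x v| := h3.symm
    _ = |∑ w ∈ G.neighborFinset v, x w| := by rw [← h1, h2]
    _ ≤ ∑ w ∈ G.neighborFinset v, |x w| := Finset.abs_sum_le_sum_abs _ _
    _ = ∑ w ∈ G.neighborFinset v, y w := rfl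
  -- S = total sum
  set S : ℝ := ∑ v, y v with hSdef
  -- double counting: ∑ v, ∑ w ∈ N(v), y w = ∑ w, degree w * y w
  have hdouble : ∑ v : Fin n, ∑ w ∈ G.neighborFinset v, y w
      = ∑ w : Fin n, (G.degree w : ℝ) * y w := by
    have : ∀ v : Fin n, ∑ w ∈ G.neighborFinset v, y w
        = ∑ w : Fin n, if G.Adj v w then y w else 0 := by
      intro v
      rw [SimpleGraph.neighborFinset_eq_filter, Finset.sum_filter]
    simp_rw [this]
    rw [Finset.sum_comm]
    congr 1
    ext w
    have : ∑ v : Fin n, (if G.Adj v w then y w else 0)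
        = (G.neighborFinset w).card * y w := by
      rw [← Finset.sum_filter, Finset.sum_const, nsmul_eq_mul]
      congr 2
      rw [SimpleGraph.neighborFinset_eq_filter]
      congr 1
      ext v
      simp [G.adj_comm v w]
    rw [this, SimpleGraph.card_neighborFinset_eq_degree]
  -- μ S ≤ ∑ deg(v) y v
  have hμS : μ * S ≤ ∑ v : Fin n, (G.degree v : ℝ) * y v := by
    rw [← hdouble, hSdef, Finset.mul_sum]
    exact Finset.sum_le_sum fun v _ => hkey v
  -- S ≥ m (μ + 1)
  have hSge : m * (μ + 1) ≤ S := by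
    have h1 : μ * m ≤ ∑ w ∈ G.neighborFinset u, y w := hkey u
    have h2 : ∑ w ∈ insert u (G.neighborFinset u), y w ≤ S := by
      apply Finset.sum_le_sum_of_subset_of_nonneg (Finset.subset_univ _)
      intro v _ _; exact hy0 v
    have hnotmem : u ∉ G.neighborFinset u := by
      simp [SimpleGraph.mem_neighborFinset]
    rw [Finset.sum_insert hnotmem] at h2
    nlinarith
  -- ∑ (deg v - δ) y v ≤ m ∑ (deg v - δ)
  have hupper : ∑ v : Fin n, ((G.degree v : ℝ) - δ) * y v ≤ m * (2 * E - δ * n) := by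
    have h1 : ∑ v : Fin n, ((G.degree v : ℝ) - δ) * y v
        ≤ ∑ v : Fin n, ((G.degree v : ℝ) - δ) * m := by
      apply Finset.sum_le_sum
      intro v _
      exact mul_le_mul_of_nonneg_left (hu v) (by linarith [hδle v])
    calc ∑ v : Fin n, ((G.degree v : ℝ) - δ) * y v
        ≤ ∑ v : Fin n, ((G.degree v : ℝ) - δ) * m := h1
      _ = (∑ v : Fin n, ((G.degree v : ℝ) - δ)) * m := by rw [Finset.sum_mul]
      _ = (2 * E - δ * n) * m := by
          rw [Finset.sum_sub_distrib, hdegsum]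
          simp [mul_comm]
      _ = m * (2 * E - δ * n) := mul_comm _ _
  -- lower bound: (μ - δ) S ≤ ∑ (deg v - δ) y v
  have hlower : (μ - δ) * S ≤ ∑ v : Fin n, ((G.degree v : ℝ) - δ) * y v := by
    have : ∑ v : Fin n, ((G.degree v : ℝ) - δ) * y v
        = (∑ v : Fin n, (G.degree v : ℝ) * y v) - δ * S := by
      rw [hSdef, Finset.mul_sum, ← Finset.sum_sub_distrib]
      congr 1; ext v; ring
    rw [this]
    have : (μ - δ) * S = μ * S - δ * S := by ring
    rw [this]
    linarith
  -- combine: (μ - δ)(μ + 1) ≤ 2E - δn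
  have hmain : (μ - δ) * (μ + 1) ≤ 2 * E - δ * n := by
    have hS1 : (μ - δ) * (m * (μ + 1)) ≤ (μ - δ) * S :=
      mul_le_mul_of_nonneg_left hSge (by linarith)
    have : (μ - δ) * (m * (μ + 1)) ≤ m * (2 * E - δ * n) := by
      linarith
    have hfin : m * ((μ - δ) * (μ + 1)) ≤ m * (2 * E - δ * n) := by nlinarith
    exact le_of_mul_le_mul_left (by linarith [hfin]) hm0
  -- finish with the quadratic
  have hsq : (2 * μ - δ + 1) ^ 2 ≤ 8 * E - 4 * δ * n + (δ + 1) ^ 2 := by nlinarith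
  have hle : 2 * μ - δ + 1 ≤ Real.sqrt (8 * E - 4 * δ * n + (δ + 1) ^ 2) := by
    rw [Real.le_sqrt (by linarith) hargnn]
    exact hsq
  linarith
end

section
/- Let Ġ be a signed graph of order n with balanced clique number ω_b(Ġ). Then the largest eigenvalue of A(Ġ) satisfies λ₁(Ġ) ≤ (1 - 1/ω_b(Ġ))·n. -/
/-!
Take an eigenvector `x` for `μ` and write `x = ε * |x|` with signs `ε u = ±1`. Then
`xᵀ A x = ∑ ε u σ(uv) ε v |x u| |x v|`, and dropping the terms with `ε u σ(uv) ε v = -1` gives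
`xᵀ A x ≤ |x|ᵀ A_H |x|`, where `H` is the graph of edges made positive by switching at `ε`.
A clique of `H` is a balanced clique of `(G, σ)`: a triangle `abc` of `H` has sign
`(ε a ε b)(ε b ε c)(ε c ε a) = 1`. The Motzkin–Straus inequality `yᵀ A_H y ≤ (1 - 1/ω(H)) (∑ y)²`
for `y ≥ 0` and Cauchy–Schwarz `(∑ y)² ≤ n ‖y‖²` finish.

Motzkin–Straus is proved by induction on the support of `y`: if it is not a clique, moving the
weight of a vertex `b` onto a non-neighbour `a` with `(A_H y) b ≤ (A_H y) a` does not decrease the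
form, keeps `∑ y`, and removes `b` from the support.
-/

open Matrix

/-- The signed adjacency matrix of a signed graph `(G, σ)`. -/
def signedAdj {V : Type*} (G : SimpleGraph V) [DecidableRel G.Adj]
    (σ : V → V → ℝ) : Matrix V V ℝ :=
  fun u v => if G.Adj u v then σ u v else 0

/-- A balanced clique of a signed graph: a set of pairwise adjacent vertices such that
every triangle inside it has positive sign (equivalently, the induced signed complete
graph is balanced). -/
def IsBalancedClique {V : Type*} (G : SimpleGraph V) (σ : V → V → ℝ) (s : Finset V) : Prop :=
  (∀ u ∈ s, ∀ v ∈ s, u ≠ v → G.Adj u v) ∧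
    (∀ a ∈ s, ∀ b ∈ s, ∀ c ∈ s, a ≠ b → b ≠ c → a ≠ c → σ a b * σ b c * σ c a = 1)

/-- The balanced clique number of a signed graph: the maximum order of a balanced clique. -/
noncomputable def balancedCliqueNum {V : Type*} (G : SimpleGraph V) (σ : V → V → ℝ) : ℕ :=
  sSup {k | ∃ s : Finset V, s.card = k ∧ IsBalancedClique G σ s}

open Finset

namespace Matrix

variable {ι K : Type*} [Fintype ι] [DecidableEq ι]

lemma exists_mulVec_eq_smul_of_mem_spectrum [Field K] {A : Matrix ι ι K} {μ : K}
    (hμ : μ ∈ spectrum K A) : ∃ x ≠ 0, A *ᵥ x = μ • x := by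
  rw [← spectrum_toLin', ← Module.End.hasEigenvalue_iff_mem_spectrum] at hμ
  obtain ⟨x, hx, hx0⟩ := hμ.exists_hasEigenvector
  exact ⟨x, hx0, by simpa using Module.End.mem_eigenspace_iff.mp hx⟩

lemma dotProduct_mulVec_add_smul_single_sub_single [CommRing K] {M : Matrix ι ι K}
    (hM : M.IsSymm) (x : ι → K) (a b : ι) (t : K) :
    (x + t • (Pi.single a 1 - Pi.single b 1)) ⬝ᵥ M *ᵥ (x + t • (Pi.single a 1 - Pi.single b 1))
      = x ⬝ᵥ M *ᵥ x + 2 * t * ((M *ᵥ x) a - (M *ᵥ x) b)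
        + t ^ 2 * (M a a - M a b - M b a + M b b) := by
  have hsymm : x ⬝ᵥ M *ᵥ (Pi.single a 1 - Pi.single b 1)
      = (M *ᵥ x) ⬝ᵥ (Pi.single a 1 - Pi.single b 1) := by
    rw [dotProduct_mulVec, ← vecMul_transpose, hM.eq]
  simp only [mulVec_add, mulVec_smul, add_dotProduct, dotProduct_add, smul_dotProduct,
    dotProduct_smul, hsymm]
  simp [dotProduct_sub, sub_dotProduct, mulVec_sub]
  ring

end Matrix

namespace SimpleGraph

variable {V : Type*} [Fintype V] (H : SimpleGraph V) [DecidableRel H.Adj]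

lemma dotProduct_adjMatrix_mulVec_le_add_smul_single_sub_single [DecidableEq V] {x : V → ℝ}
    {a b : V} (hab : ¬ H.Adj a b) (hx : (H.adjMatrix ℝ *ᵥ x) b ≤ (H.adjMatrix ℝ *ᵥ x) a)
    {t : ℝ} (ht : 0 ≤ t) :
    x ⬝ᵥ H.adjMatrix ℝ *ᵥ x ≤ (x + t • (Pi.single a 1 - Pi.single b 1)) ⬝ᵥ
      H.adjMatrix ℝ *ᵥ (x + t • (Pi.single a 1 - Pi.single b 1)) := by
  rw [dotProduct_mulVec_add_smul_single_sub_single H.isSymm_adjMatrix x a b t]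
  simp only [adjMatrix_apply, H.loopless.irrefl, H.adj_comm b a, hab, if_false]
  nlinarith

lemma dotProduct_adjMatrix_mulVec_of_isClique_support {x : V → ℝ}
    (hx : H.IsClique (Function.support x)) :
    x ⬝ᵥ H.adjMatrix ℝ *ᵥ x = (∑ u, x u) ^ 2 - ∑ u, x u ^ 2 := by
  classical
  have hrow : ∀ u, x u * (H.adjMatrix ℝ *ᵥ x) u = x u * ∑ v, x v - x u ^ 2 := by
    intro u
    by_cases hu : x u = 0
    · simp [hu]
    have hentry : ∀ v, (if H.Adj u v then x v else 0) = x v - if u = v then x v else 0 := by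
      intro v
      by_cases huv : u = v
      · simp [huv]
      by_cases hv : x v = 0
      · simp [hv]
      simp [hx hu hv huv, huv]
    simp only [mulVec, dotProduct, adjMatrix_apply, ite_mul, one_mul, zero_mul, hentry,
      sum_sub_distrib, sum_ite_eq, mem_univ, if_true]
    ring
  simp only [dotProduct, hrow, sum_sub_distrib, ← sum_mul, sq]

lemma dotProduct_adjMatrix_mulVec_le_of_isClique_support {k : ℕ}
    (hk : ∀ s : Finset V, H.IsClique (s : Set V) → #s ≤ k) {x : V → ℝ}
    (hx : H.IsClique (Function.support x)) :
    x ⬝ᵥ H.adjMatrix ℝ *ᵥ x ≤ (1 - 1 / k) * (∑ u, x u) ^ 2 := by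
  set S : Finset V := {u | x u ≠ 0}
  have hS : (S : Set V) = Function.support x := by ext; simp [S]
  have hCS : (∑ u, x u) ^ 2 ≤ k * ∑ u, x u ^ 2 := calc
    (∑ u, x u) ^ 2 = (∑ u ∈ S, x u) ^ 2 := by rw [sum_filter_ne_zero]
    _ ≤ #S * ∑ u ∈ S, x u ^ 2 := sq_sum_le_card_mul_sum_sq
    _ ≤ k * ∑ u, x u ^ 2 := by
      rw [sum_filter_of_ne fun u _ h => by simpa using h]
      gcongr
      exact_mod_cast hk S (hS ▸ hx)
  rw [H.dotProduct_adjMatrix_mulVec_of_isClique_support hx]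
  rcases k.eq_zero_or_pos with rfl | hk0
  · nlinarith [sum_nonneg fun u (_ : u ∈ univ) => sq_nonneg (x u)]
  · have : (∑ u, x u) ^ 2 / k ≤ ∑ u, x u ^ 2 := by
      rw [div_le_iff₀ (by positivity)]; linarith
    linarith [show (1 - 1 / (k : ℝ)) * (∑ u, x u) ^ 2 = (∑ u, x u) ^ 2 - (∑ u, x u) ^ 2 / k by
      ring]

theorem dotProduct_adjMatrix_mulVec_le {k : ℕ}
    (hk : ∀ s : Finset V, H.IsClique (s : Set V) → #s ≤ k) {x : V → ℝ} (hx : 0 ≤ x) :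
    x ⬝ᵥ H.adjMatrix ℝ *ᵥ x ≤ (1 - 1 / k) * (∑ u, x u) ^ 2 := by
  classical
  induction hm : #{u | x u ≠ 0} using Nat.strong_induction_on generalizing x with
  | _ m ih =>
  by_cases hclique : H.IsClique (Function.support x)
  · exact H.dotProduct_adjMatrix_mulVec_le_of_isClique_support hk hclique
  obtain ⟨a, ha, b, hb, hab, hnadj⟩ : ∃ a, x a ≠ 0 ∧ ∃ b, x b ≠ 0 ∧ a ≠ b ∧ ¬ H.Adj a b := by
    simpa [IsClique, Set.Pairwise] using hclique
  wlog hr : (H.adjMatrix ℝ *ᵥ x) b ≤ (H.adjMatrix ℝ *ᵥ x) a generalizing a b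
  · exact this b hb a ha hab.symm (fun h => hnadj h.symm) (le_of_not_ge hr)
  set x' := x + x b • (Pi.single a 1 - Pi.single b 1 : V → ℝ)
  have hx'a : x' a = x a + x b := by simp [x', hab]
  have hx'b : x' b = 0 := by simp [x', hab.symm]
  have hx'ne : ∀ u, u ≠ a → u ≠ b → x' u = x u := fun u hua hub => by simp [x', hua, hub]
  have hx'nonneg : 0 ≤ x' := fun u => show (0 : ℝ) ≤ x' u by
    by_cases hua : u = a
    · subst hua; rw [hx'a]; exact add_nonneg (hx u) (hx b)
    by_cases hub : u = b
    · rw [hub, hx'b]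
    rw [hx'ne u hua hub]; exact hx u
  have hsum : ∑ u, x' u = ∑ u, x u := by
    simp [x', sum_add_distrib, ← mul_sum, sum_sub_distrib]
  have hsupp : #{u | x' u ≠ 0} < m := by
    rw [← hm]
    refine card_lt_card ((ssubset_iff_of_subset fun u hu => ?_).mpr ⟨b, by simpa, by simp [hx'b]⟩)
    simp only [mem_filter, mem_univ, true_and] at hu ⊢
    by_cases hua : u = a
    · rwa [hua]
    by_cases hub : u = b
    · exact absurd (hub ▸ hx'b) hu
    rwa [hx'ne u hua hub] at hu
  calc x ⬝ᵥ H.adjMatrix ℝ *ᵥ x ≤ x' ⬝ᵥ H.adjMatrix ℝ *ᵥ x' :=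
        H.dotProduct_adjMatrix_mulVec_le_add_smul_single_sub_single hnadj hr (hx b)
    _ ≤ (1 - 1 / k) * (∑ u, x' u) ^ 2 := ih _ hsupp hx'nonneg rfl
    _ = (1 - 1 / k) * (∑ u, x u) ^ 2 := by rw [hsum]

end SimpleGraph

section SignedGraph

variable {V : Type*} (G : SimpleGraph V) (σ : V → V → ℝ)

/-- The edges `uv` of `G` that become positive when `σ` is switched at the vertex signs
`ε = ±1`, i.e. with `ε u * σ u v * ε v = 1`. -/
def switchedPositiveGraph (ε : V → ℝ) : SimpleGraph V :=
  SimpleGraph.fromRel fun u v => G.Adj u v ∧ σ u v = ε u * ε v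

lemma isBalancedClique_singleton (v : V) : IsBalancedClique G σ {v} := by
  constructor <;> simp +contextual

lemma IsBalancedClique.card_le_balancedCliqueNum [Finite V] {s : Finset V}
    (hs : IsBalancedClique G σ s) : #s ≤ balancedCliqueNum G σ := by
  have := Fintype.ofFinite V
  exact le_csSup ⟨Fintype.card V, by rintro _ ⟨t, rfl, -⟩; exact card_le_univ t⟩ ⟨s, rfl, hs⟩

lemma one_le_balancedCliqueNum [Finite V] [Nonempty V] : 1 ≤ balancedCliqueNum G σ :=
  (isBalancedClique_singleton G σ (Classical.arbitrary V)).card_le_balancedCliqueNum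

variable {G σ} {ε : V → ℝ}

lemma isBalancedClique_of_isClique_switchedPositiveGraph (hσ : ∀ u v, σ u v = σ v u)
    (hε : ∀ u, ε u = 1 ∨ ε u = -1) {s : Finset V}
    (hs : (switchedPositiveGraph G σ ε).IsClique (s : Set V)) : IsBalancedClique G σ s := by
  have hadj : ∀ u ∈ s, ∀ v ∈ s, u ≠ v → G.Adj u v ∧ σ u v = ε u * ε v := by
    intro u hu v hv huv
    rcases ((SimpleGraph.fromRel_adj _ _ _).mp (hs hu hv huv)).2 with h | h
    · exact h
    · exact ⟨h.1.symm, by rw [hσ, h.2, mul_comm]⟩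
  have hε2 : ∀ u, ε u * ε u = 1 := fun u => by rcases hε u with h | h <;> simp [h]
  refine ⟨fun u hu v hv huv => (hadj u hu v hv huv).1, fun a ha b hb c hc hab hbc hac => ?_⟩
  calc σ a b * σ b c * σ c a = (ε a * ε a) * (ε b * ε b) * (ε c * ε c) := by
        rw [(hadj a ha b hb hab).2, (hadj b hb c hc hbc).2, (hadj c hc a ha hac.symm).2]; ring
    _ = 1 := by simp [hε2]

lemma dotProduct_signedAdj_mulVec_le [Fintype V] [DecidableRel G.Adj]
    [DecidableRel (switchedPositiveGraph G σ ε).Adj]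
    (hσ : ∀ u v, G.Adj u v → σ u v = 1 ∨ σ u v = -1) (hε : ∀ u, ε u = 1 ∨ ε u = -1)
    {y : V → ℝ} (hy : 0 ≤ y) :
    (ε * y) ⬝ᵥ signedAdj G σ *ᵥ (ε * y)
      ≤ y ⬝ᵥ (switchedPositiveGraph G σ ε).adjMatrix ℝ *ᵥ y := by
  rw [SimpleGraph.dotProduct_mulVec_adjMatrix]
  simp only [dotProduct, mulVec, mul_sum, Pi.mul_apply]
  gcongr with u _ v _
  have hyy := mul_nonneg (hy u) (hy v)
  by_cases hG : G.Adj u v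
  swap
  · simp only [signedAdj, hG, if_false]
    split_ifs <;> simp [hyy]
  have hterm : ε u * y u * (signedAdj G σ u v * (ε v * y v))
      = (ε u * σ u v * ε v) * (y u * y v) := by
    simp only [signedAdj, if_pos hG]; ring
  rw [hterm]
  split_ifs with hH
  · have : ε u * σ u v * ε v ≤ 1 := by
      rcases hσ u v hG with h | h <;> rcases hε u with hu | hu <;> rcases hε v with hv | hv <;>
        norm_num [h, hu, hv]
    nlinarith
  · have hne : σ u v ≠ ε u * ε v := fun h =>
      hH ((SimpleGraph.fromRel_adj _ _ _).mpr ⟨G.ne_of_adj hG, .inl ⟨hG, h⟩⟩)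
    have : ε u * σ u v * ε v = -1 := by
      rcases hσ u v hG with h | h <;> rcases hε u with hu | hu <;> rcases hε v with hv | hv <;>
        revert hne <;> norm_num [h, hu, hv]
    nlinarith

end SignedGraph

lemma exists_sign_mul_abs {V : Type*} (x : V → ℝ) :
    ∃ ε : V → ℝ, (∀ u, ε u = 1 ∨ ε u = -1) ∧ x = ε * |x| := by
  refine ⟨fun u => if x u < 0 then -1 else 1, fun u => by dsimp only; split_ifs <;> simp,
    funext fun u => ?_⟩
  simp only [Pi.mul_apply, Pi.abs_apply]
  split_ifs with h
  · rw [abs_of_neg h]; ring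
  · rw [abs_of_nonneg (not_lt.mp h)]; ring

/-- Every eigenvalue of a signed graph of order `n` is at most `(1 - 1/ω_b) * n`, where
`ω_b` is the balanced clique number. -/
theorem signed_eigenvalue_le_balancedCliqueNum_bound (n : ℕ)
    (G : SimpleGraph (Fin n)) [DecidableRel G.Adj] (σ : Fin n → Fin n → ℝ)
    (hσsymm : ∀ u v, σ u v = σ v u)
    (hσsign : ∀ u v, G.Adj u v → σ u v = 1 ∨ σ u v = -1)
    (μ : ℝ) (hμ : μ ∈ spectrum ℝ (signedAdj G σ)) :
    μ ≤ (1 - 1 / (balancedCliqueNum G σ : ℝ)) * n := by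
  classical
  obtain ⟨x, hx0, hAx⟩ := exists_mulVec_eq_smul_of_mem_spectrum hμ
  obtain ⟨ε, hε, hxε⟩ := exists_sign_mul_abs x
  have : Nonempty (Fin n) := let ⟨u, _⟩ := Function.ne_iff.mp hx0; ⟨u⟩
  have hω : (0 : ℝ) ≤ 1 - 1 / balancedCliqueNum G σ := by
    have : (1 : ℝ) ≤ balancedCliqueNum G σ := by exact_mod_cast one_le_balancedCliqueNum G σ
    rw [sub_nonneg, div_le_one (by linarith)]
    exact this
  have hclique : ∀ s : Finset (Fin n), (switchedPositiveGraph G σ ε).IsClique (s : Set (Fin n)) →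
      #s ≤ balancedCliqueNum G σ := fun _ hs =>
    (isBalancedClique_of_isClique_switchedPositiveGraph hσsymm hε hs).card_le_balancedCliqueNum
  have hpos : 0 < x ⬝ᵥ x := by simpa using dotProduct_star_self_pos_iff.mpr hx0
  refine le_of_mul_le_mul_right ?_ hpos
  calc μ * (x ⬝ᵥ x) = (ε * |x|) ⬝ᵥ signedAdj G σ *ᵥ (ε * |x|) := by
        rw [← hxε, hAx, dotProduct_smul, smul_eq_mul]
    _ ≤ |x| ⬝ᵥ (switchedPositiveGraph G σ ε).adjMatrix ℝ *ᵥ |x| :=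
        dotProduct_signedAdj_mulVec_le hσsign hε (abs_nonneg x)
    _ ≤ (1 - 1 / balancedCliqueNum G σ) * (∑ u, |x| u) ^ 2 :=
        SimpleGraph.dotProduct_adjMatrix_mulVec_le _ hclique (abs_nonneg x)
    _ ≤ (1 - 1 / balancedCliqueNum G σ) * (n * ∑ u, |x| u ^ 2) := by
        gcongr
        simpa using sq_sum_le_card_mul_sum_sq (s := univ) (f := |x|)
    _ = (1 - 1 / balancedCliqueNum G σ) * n * (x ⬝ᵥ x) := by
        simp [dotProduct, sq, mul_assoc]
end

section
/- If Ġ = (G,σ) is a connected signed graph, then λ₁(Ġ) ≤ λ₁(G), with equality if and only if Ġ is balanced. -/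
/-!
Let `x` be an eigenvector of the signed adjacency matrix `S` for `λ₁(S)`. Entrywise
`x_u S_uv x_v ≤ |x_u| A_uv |x_v|`, so the Rayleigh principle gives `λ₁(S) ≤ λ₁(A)`. If equality
holds, `|x|` maximizes the Rayleigh quotient of `A`, hence is a nonnegative eigenvector, which on a
connected graph has no zero entry; the entrywise equalities then read `σ(uv) = s(u) s(v)` with
`s = |x| / x`, and every cycle is positive. Conversely, in a balanced graph every closed walk is
positive, because bypassing a repeated vertex only removes a path closed by an edge (a cycle or a
backtrack); so the signs of walks from a base vertex give such an `s`, and `S = D A D` with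
`D = diag s = D⁻¹` has the spectrum of `A`.
-/

open Matrix

/-- The product of the edge signs along a walk in a signed graph. -/
def walkSign {V : Type*} {G : SimpleGraph V} (σ : V → V → ℝ) {u v : V} (w : G.Walk u v) : ℝ :=
  (w.darts.map fun d => σ d.toProd.1 d.toProd.2).prod

/-- A signed graph is balanced if every cycle has edge-sign product `1`. -/
def IsBalanced {V : Type*} (G : SimpleGraph V) (σ : V → V → ℝ) : Prop :=
  ∀ (v : V) (w : G.Walk v v), w.IsCycle → walkSign σ w = 1

namespace Matrix.IsHermitian

variable {n : Type*} [Fintype n] [DecidableEq n] {B : Matrix n n ℝ}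

lemma sSup_spectrum_mem [Nonempty n] (hB : B.IsHermitian) :
    sSup (spectrum ℝ B) ∈ spectrum ℝ B := by
  rw [hB.spectrum_real_eq_range_eigenvalues]
  exact (Set.range_nonempty _).csSup_mem (Set.finite_range _)

lemma exists_mulVec_eq_sSup_spectrum_smul [Nonempty n] (hB : B.IsHermitian) :
    ∃ x : n → ℝ, x ≠ 0 ∧ B *ᵥ x = sSup (spectrum ℝ B) • x := by
  obtain ⟨i, hi⟩ : sSup (spectrum ℝ B) ∈ Set.range hB.eigenvalues :=
    hB.spectrum_real_eq_range_eigenvalues ▸ hB.sSup_spectrum_mem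
  refine ⟨hB.eigenvectorBasis i, ?_, hi ▸ hB.mulVec_eigenvectorBasis i⟩
  simpa using hB.eigenvectorBasis.orthonormal.ne_zero i

lemma posSemidef_sSup_spectrum_smul_one_sub (hB : B.IsHermitian) :
    (sSup (spectrum ℝ B) • (1 : Matrix n n ℝ) - B).PosSemidef := by
  refine posSemidef_iff_isHermitian_and_spectrum_nonneg.2
    ⟨(isHermitian_one.smul (.all _)).sub hB, ?_⟩
  rw [← Algebra.algebraMap_eq_smul_one, ← spectrum.singleton_sub_eq]
  rintro _ ⟨c, rfl, μ, hμ, rfl⟩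
  exact sub_nonneg.2 (le_csSup finite_real_spectrum.bddAbove hμ)

lemma dotProduct_mulVec_le (hB : B.IsHermitian) (x : n → ℝ) :
    x ⬝ᵥ B *ᵥ x ≤ sSup (spectrum ℝ B) * (x ⬝ᵥ x) := by
  have := hB.posSemidef_sSup_spectrum_smul_one_sub.dotProduct_mulVec_nonneg x
  rw [star_trivial, sub_mulVec, dotProduct_sub, smul_mulVec, one_mulVec, dotProduct_smul,
    smul_eq_mul] at this
  linarith

lemma mulVec_eq_sSup_spectrum_smul_of_dotProduct_mulVec_eq (hB : B.IsHermitian) {x : n → ℝ}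
    (h : x ⬝ᵥ B *ᵥ x = sSup (spectrum ℝ B) * (x ⬝ᵥ x)) :
    B *ᵥ x = sSup (spectrum ℝ B) • x := by
  have := (hB.posSemidef_sSup_spectrum_smul_one_sub.dotProduct_mulVec_zero_iff x).1 <| by
    rw [star_trivial, sub_mulVec, dotProduct_sub, smul_mulVec, one_mulVec, dotProduct_smul,
      smul_eq_mul, h, sub_self]
  rw [sub_mulVec, sub_eq_zero, smul_mulVec, one_mulVec] at this
  exact this.symm

end Matrix.IsHermitian

section WalkSign

open SimpleGraph

variable {V : Type*} {G : SimpleGraph V} {σ : V → V → ℝ}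

@[simp] lemma walkSign_nil {v : V} : walkSign σ (Walk.nil : G.Walk v v) = 1 := rfl

@[simp] lemma walkSign_cons {u v w : V} (h : G.Adj u v) (p : G.Walk v w) :
    walkSign σ (.cons h p) = σ u v * walkSign σ p := by
  simp [walkSign]

lemma walkSign_append {u v w : V} (p : G.Walk u v) (q : G.Walk v w) :
    walkSign σ (p.append q) = walkSign σ p * walkSign σ q := by
  simp [walkSign, Walk.darts_append]

lemma walkSign_reverse (hσsymm : ∀ u v, σ u v = σ v u) {u v : V} (p : G.Walk u v) :
    walkSign σ p.reverse = walkSign σ p := by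
  induction p with
  | nil => rfl
  | cons h p ih =>
    rw [Walk.reverse_cons, walkSign_append, ih, walkSign_cons, walkSign_cons,
      walkSign_nil, hσsymm, mul_one, mul_comm]

lemma walkSign_mul_self (hσsign : ∀ u v, G.Adj u v → σ u v = 1 ∨ σ u v = -1)
    {u v : V} (p : G.Walk u v) : walkSign σ p * walkSign σ p = 1 := by
  induction p with
  | nil => simp
  | cons h p ih =>
    rw [walkSign_cons, mul_mul_mul_comm, ih, mul_one]
    rcases hσsign _ _ h with h | h <;> simp [h]

lemma walkSign_eq_mul_of_switching {s : V → ℝ} (hs : ∀ v, s v * s v = 1)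
    (hσ : ∀ u v, G.Adj u v → σ u v = s u * s v) {u v : V} (p : G.Walk u v) :
    walkSign σ p = s u * s v := by
  induction p with
  | nil => exact (hs _).symm
  | @cons a b c h p ih =>
    rw [walkSign_cons, hσ _ _ h, ih]
    linear_combination s a * s c * hs b

lemma isBalanced_of_switching {s : V → ℝ} (hs : ∀ v, s v * s v = 1)
    (hσ : ∀ u v, G.Adj u v → σ u v = s u * s v) : IsBalanced G σ :=
  fun v w _ => (walkSign_eq_mul_of_switching hs hσ w).trans (hs v)

variable [DecidableEq V]

lemma IsBalanced.mul_walkSign_eq_one_of_isPath (hσsymm : ∀ u v, σ u v = σ v u)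
    (hσsign : ∀ u v, G.Adj u v → σ u v = 1 ∨ σ u v = -1) (hbal : IsBalanced G σ) {u v : V}
    (h : G.Adj u v) {q : G.Walk v u} (hq : q.IsPath) : σ u v * walkSign σ q = 1 := by
  by_cases he : s(u, v) ∈ q.edges
  · rw [hq.eq_adj_toWalk_of_mem_edges (Sym2.eq_swap ▸ he), Adj.toWalk,
      walkSign_cons, walkSign_nil, mul_one, hσsymm v u]
    rcases hσsign u v h with h | h <;> simp [h]
  · simpa using hbal u _ ((Walk.cons_isCycle_iff q h).2 ⟨hq, he⟩)

lemma IsBalanced.walkSign_bypass (hσsymm : ∀ u v, σ u v = σ v u)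
    (hσsign : ∀ u v, G.Adj u v → σ u v = 1 ∨ σ u v = -1) (hbal : IsBalanced G σ)
    {u v : V} (p : G.Walk u v) :
    walkSign σ p.bypass = walkSign σ p := by
  induction p with
  | nil => rfl
  | @cons u a v h p ih =>
    rw [Walk.bypass]
    split_ifs with hu
    · conv_rhs => rw [walkSign_cons, ← ih, ← p.bypass.take_spec hu, walkSign_append,
        ← mul_assoc, hbal.mul_walkSign_eq_one_of_isPath hσsymm hσsign h
          (p.bypass_isPath.takeUntil hu), one_mul]
    · rw [walkSign_cons, walkSign_cons, ih]

lemma IsBalanced.walkSign_eq_one_of_closed (hσsymm : ∀ u v, σ u v = σ v u)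
    (hσsign : ∀ u v, G.Adj u v → σ u v = 1 ∨ σ u v = -1) (hbal : IsBalanced G σ)
    {v : V} (w : G.Walk v v) :
    walkSign σ w = 1 := by
  rw [← hbal.walkSign_bypass hσsymm hσsign,
    (Walk.isPath_iff_nil.1 w.bypass_isPath).eq_nil, walkSign_nil]

lemma IsBalanced.exists_switching (hσsymm : ∀ u v, σ u v = σ v u)
    (hσsign : ∀ u v, G.Adj u v → σ u v = 1 ∨ σ u v = -1) (hbal : IsBalanced G σ)
    (hconn : G.Connected) :
    ∃ s : V → ℝ, (∀ v, s v * s v = 1) ∧ ∀ u v, G.Adj u v → σ u v = s u * s v := by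
  obtain ⟨v₀⟩ := hconn.nonempty
  let p : ∀ u, G.Walk v₀ u := fun u => (hconn.preconnected v₀ u).some
  refine ⟨fun u => walkSign σ (p u), fun u => walkSign_mul_self hσsign (p u), fun u v h => ?_⟩
  have hclosed :=
    hbal.walkSign_eq_one_of_closed hσsymm hσsign ((p u).append (.cons h (p v).reverse))
  rw [walkSign_append, walkSign_cons, walkSign_reverse hσsymm] at hclosed
  linear_combination walkSign σ (p u) * walkSign σ (p v) * hclosed
    - σ u v * walkSign_mul_self hσsign (p u)
    - σ u v * walkSign σ (p u) * walkSign σ (p u) * walkSign_mul_self hσsign (p v)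

end WalkSign

lemma Matrix.dotProduct_mulVec_eq_sum_prod {V R : Type*} [Fintype V] [CommSemiring R]
    (M : Matrix V V R) (x : V → R) :
    x ⬝ᵥ M *ᵥ x = ∑ p : V × V, x p.1 * M p.1 p.2 * x p.2 := by
  simp only [Fintype.sum_prod_type, dotProduct, mulVec, Finset.mul_sum, mul_comm, mul_left_comm]

namespace SimpleGraph

variable {V : Type*} [Fintype V] {G : SimpleGraph V} [DecidableRel G.Adj]

lemma Connected.eq_zero_of_adjMatrix_mulVec_eq_smul (hconn : G.Connected) {y : V → ℝ}
    (hy : 0 ≤ y) {c : ℝ} (hyc : G.adjMatrix ℝ *ᵥ y = c • y) {v : V} (hv : y v = 0) :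
    y = 0 := by
  have hnbr : ∀ {a b : V}, G.Adj a b → y a = 0 → y b = 0 := fun {a b} hab ha => by
    have hsum : ∑ u ∈ G.neighborFinset a, y u = 0 := by
      rw [← adjMatrix_mulVec_apply, hyc, Pi.smul_apply, ha, smul_zero]
    exact (Finset.sum_eq_zero_iff_of_nonneg fun u _ => hy u).1 hsum b (by simpa using hab)
  have hwalk : ∀ {a b : V}, G.Walk a b → y a = 0 → y b = 0 := fun p => by
    induction p with
    | nil => exact id
    | cons h _ ih => exact ih ∘ hnbr h
  exact funext fun b => hwalk (hconn.preconnected v b).some hv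

end SimpleGraph

section SignedAdj

open SimpleGraph

variable {V : Type*} {G : SimpleGraph V} [DecidableRel G.Adj] {σ : V → V → ℝ}

variable (G) in
lemma isHermitian_signedAdj (hσsymm : ∀ u v, σ u v = σ v u) :
    (signedAdj G σ).IsHermitian := by
  refine Matrix.isHermitian_iff_isSymm.2 (Matrix.IsSymm.ext fun u v => ?_)
  simp only [signedAdj, G.adj_comm u v, hσsymm u v]

lemma mul_signedAdj_mul_le (hσsign : ∀ u v, G.Adj u v → σ u v = 1 ∨ σ u v = -1)
    (x : V → ℝ) (u v : V) :
    x u * signedAdj G σ u v * x v ≤ |x u| * G.adjMatrix ℝ u v * |x v| := by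
  by_cases h : G.Adj u v
  · rcases hσsign u v h with hσ | hσ <;>
      simp only [signedAdj, h, hσ, adjMatrix_apply, if_true, mul_one, mul_neg, neg_mul,
        ← abs_mul]
    exacts [le_abs_self _, neg_le_abs _]
  · simp [signedAdj, h]

variable [Fintype V]

lemma dotProduct_signedAdj_mulVec_le_s8 (hσsign : ∀ u v, G.Adj u v → σ u v = 1 ∨ σ u v = -1)
    (x : V → ℝ) : x ⬝ᵥ signedAdj G σ *ᵥ x ≤ |x| ⬝ᵥ G.adjMatrix ℝ *ᵥ |x| := by
  simp only [dotProduct_mulVec_eq_sum_prod, Pi.abs_apply]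
  exact Finset.sum_le_sum fun p _ => mul_signedAdj_mul_le hσsign x p.1 p.2

lemma mul_signedAdj_mul_eq_of_dotProduct_eq
    (hσsign : ∀ u v, G.Adj u v → σ u v = 1 ∨ σ u v = -1) {x : V → ℝ}
    (h : x ⬝ᵥ signedAdj G σ *ᵥ x = |x| ⬝ᵥ G.adjMatrix ℝ *ᵥ |x|) (u v : V) :
    x u * signedAdj G σ u v * x v = |x u| * G.adjMatrix ℝ u v * |x v| := by
  simp only [dotProduct_mulVec_eq_sum_prod, Pi.abs_apply] at h
  exact (Finset.sum_eq_sum_iff_of_le fun p _ => mul_signedAdj_mul_le hσsign x p.1 p.2).1 h (u, v)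
    (Finset.mem_univ _)

variable [DecidableEq V]

lemma signedAdj_eq_diagonal_mul_adjMatrix_mul_diagonal {s : V → ℝ}
    (hσ : ∀ u v, G.Adj u v → σ u v = s u * s v) :
    signedAdj G σ = diagonal s * G.adjMatrix ℝ * diagonal s := by
  ext u v
  rw [mul_diagonal, diagonal_mul]
  by_cases h : G.Adj u v <;> simp [signedAdj, h, hσ]

lemma spectrum_signedAdj_eq_of_switching {s : V → ℝ} (hs : ∀ v, s v * s v = 1)
    (hσ : ∀ u v, G.Adj u v → σ u v = s u * s v) :
    spectrum ℝ (signedAdj G σ) = spectrum ℝ (G.adjMatrix ℝ) := by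
  have hD : diagonal s * diagonal s = 1 := by
    rw [diagonal_mul_diagonal, ← diagonal_one]
    exact congrArg diagonal (funext hs)
  rw [signedAdj_eq_diagonal_mul_adjMatrix_mul_diagonal hσ]
  exact spectrum.units_conjugate (u := ⟨diagonal s, diagonal s, hD, hD⟩)

theorem sSup_spectrum_signedAdj_le [Nonempty V] (hσsymm : ∀ u v, σ u v = σ v u)
    (hσsign : ∀ u v, G.Adj u v → σ u v = 1 ∨ σ u v = -1) :
    sSup (spectrum ℝ (signedAdj G σ)) ≤ sSup (spectrum ℝ (G.adjMatrix ℝ)) := by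
  obtain ⟨x, hx0, hx⟩ := 
    (isHermitian_signedAdj G hσsymm).exists_mulVec_eq_sSup_spectrum_smul
  refine le_of_mul_le_mul_right ?_ (dotProduct_self_star_pos_iff.2 hx0)
  calc sSup (spectrum ℝ (signedAdj G σ)) * (x ⬝ᵥ x) = x ⬝ᵥ signedAdj G σ *ᵥ x := by
        rw [hx, dotProduct_smul, smul_eq_mul]
    _ ≤ |x| ⬝ᵥ G.adjMatrix ℝ *ᵥ |x| := dotProduct_signedAdj_mulVec_le_s8 hσsign x
    _ ≤ sSup (spectrum ℝ (G.adjMatrix ℝ)) * (|x| ⬝ᵥ |x|) :=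
        (G.isHermitian_adjMatrix ℝ).dotProduct_mulVec_le _
    _ = sSup (spectrum ℝ (G.adjMatrix ℝ)) * (x ⬝ᵥ x) := by
        simp [dotProduct, abs_mul_abs_self]

theorem exists_switching_of_sSup_spectrum_signedAdj_eq (hσsymm : ∀ u v, σ u v = σ v u)
    (hσsign : ∀ u v, G.Adj u v → σ u v = 1 ∨ σ u v = -1) (hconn : G.Connected)
    (heq : sSup (spectrum ℝ (signedAdj G σ)) = sSup (spectrum ℝ (G.adjMatrix ℝ))) :
    ∃ s : V → ℝ, (∀ v, s v * s v = 1) ∧ ∀ u v, G.Adj u v → σ u v = s u * s v := by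
  have := hconn.nonempty
  obtain ⟨x, hx0, hx⟩ := 
    (isHermitian_signedAdj G hσsymm).exists_mulVec_eq_sSup_spectrum_smul
  set c := sSup (spectrum ℝ (G.adjMatrix ℝ))
  have habs : |x| ⬝ᵥ |x| = x ⬝ᵥ x := by simp [dotProduct, abs_mul_abs_self]
  have hS : x ⬝ᵥ signedAdj G σ *ᵥ x = c * (x ⬝ᵥ x) := by
    rw [hx, dotProduct_smul, smul_eq_mul, heq]
  have hquad : x ⬝ᵥ signedAdj G σ *ᵥ x = |x| ⬝ᵥ G.adjMatrix ℝ *ᵥ |x| :=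
    (dotProduct_signedAdj_mulVec_le_s8 hσsign x).antisymm <| by
      rw [hS, ← habs]; exact (G.isHermitian_adjMatrix ℝ).dotProduct_mulVec_le _
  have heig : G.adjMatrix ℝ *ᵥ |x| = c • |x| :=
    (G.isHermitian_adjMatrix ℝ).mulVec_eq_sSup_spectrum_smul_of_dotProduct_mulVec_eq
      (by rw [← hquad, hS, habs])
  have hne : ∀ v, x v ≠ 0 := fun v hv =>
    hx0 <| funext fun w => abs_eq_zero.1 <| congrFun (hconn.eq_zero_of_adjMatrix_mulVec_eq_smul
      (fun u => abs_nonneg (x u)) heig (v := v) (by simp [hv])) w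
  refine ⟨fun v => |x v| / x v, fun v => ?_, fun u v h => ?_⟩
  · rw [div_mul_div_comm, abs_mul_abs_self, div_self (mul_ne_zero (hne v) (hne v))]
  · have hterm := mul_signedAdj_mul_eq_of_dotProduct_eq hσsign hquad u v
    simp only [signedAdj, h, if_true, adjMatrix_apply, mul_one] at hterm
    rw [div_mul_div_comm, eq_div_iff (mul_ne_zero (hne u) (hne v))]
    linarith

end SignedAdj


/-- For a connected signed graph `(G, σ)`, the largest eigenvalue of the signed adjacency
matrix is at most the largest eigenvalue of the adjacency matrix of the underlying graph,
with equality if and only if the signed graph is balanced. -/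
theorem signed_index_le_underlying_index {V : Type*} [Fintype V] [DecidableEq V]
    (G : SimpleGraph V) [DecidableRel G.Adj] (σ : V → V → ℝ)
    (hσsymm : ∀ u v, σ u v = σ v u)
    (hσsign : ∀ u v, G.Adj u v → σ u v = 1 ∨ σ u v = -1)
    (hconn : G.Connected) :
    sSup (spectrum ℝ (signedAdj G σ)) ≤ sSup (spectrum ℝ (G.adjMatrix ℝ)) ∧
      (sSup (spectrum ℝ (signedAdj G σ)) = sSup (spectrum ℝ (G.adjMatrix ℝ)) ↔
        IsBalanced G σ) := by
  have := hconn.nonempty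
  refine ⟨sSup_spectrum_signedAdj_le hσsymm hσsign, fun heq => ?_, fun hbal => ?_⟩
  · obtain ⟨s, hs, hσ⟩ :=
      exists_switching_of_sSup_spectrum_signedAdj_eq hσsymm hσsign hconn heq
    exact isBalanced_of_switching hs hσ
  · obtain ⟨s, hs, hσ⟩ := hbal.exists_switching hσsymm hσsign hconn
    rw [spectrum_signedAdj_eq_of_switching hs hσ]
end

section
/- The signed graph Ġ₁(0, n-3), consisting of an all-positive complete graph on n-1 vertices {v, w, v₁, …, v_{n-3}} together with an extra vertex u joined to v by a negative edge and to w by a positive edge, has largest eigenvalue exactly n-2; moreover its spectrum is {n-2, 1, -1 with multiplicity n-2, -2} (i.e., the remaining eigenvalues besides n-2, 1, -2 are all -1). -/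
open Matrix Polynomial

/-- The signed adjacency matrix of the signed graph `Ġ₁(0, n-3)`: vertex `0` (= `u`) is
joined to vertex `1` (= `v`) by a negative edge and to vertex `2` (= `w`) by a positive
edge, and all the vertices `1, 2, …, n-1` are pairwise joined by positive edges. -/
def G1adj (n : ℕ) : Matrix (Fin n) (Fin n) ℝ :=
  fun i j =>
    if i = j then 0
    else if i.1 = 0 then (if j.1 = 1 then -1 else if j.1 = 2 then 1 else 0)
    else if j.1 = 0 then (if i.1 = 1 then -1 else if i.1 = 2 then 1 else 0)
    else 1

noncomputable abbrev KK := FractionRing (Polynomial ℝ)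

noncomputable def e0v (n : ℕ) : Fin n → KK := fun i => if (i : ℕ) = 0 then 1 else 0
noncomputable def uvv (n : ℕ) : Fin n → KK := fun i =>
  if (i : ℕ) = 1 then -2 else if (i : ℕ) = 0 then 0 else if (i : ℕ) = 2 then 0 else -1

noncomputable def Umat (n : ℕ) : Matrix (Fin n) (Fin 3) KK := fun i => ![1, uvv n i, e0v n i]
noncomputable def Vmat (n : ℕ) : Matrix (Fin 3) (Fin n) KK :=
  Matrix.of ![fun _ => 1, e0v n, uvv n]

lemma sum_point (n k : ℕ) (hk : k < n) (c : KK) :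
    ∑ i : Fin n, (if (i : ℕ) = k then c else 0) = c := by
  have h : ∀ i : Fin n, ((i : ℕ) = k) = (i = ⟨k, hk⟩) := by
    intro i; simp [Fin.ext_iff]
  simp_rw [h]
  simp

lemma sum_uv (n : ℕ) (hn : 4 ≤ n) : ∑ i, uvv n i = 1 - (n : KK) := by
  have h : ∀ i : Fin n, uvv n i = -1 + ((if (i:ℕ) = 0 then (1:KK) else 0)
      + (if (i:ℕ) = 1 then (-1:KK) else 0) + (if (i:ℕ) = 2 then (1:KK) else 0)) := by
    intro i; unfold uvv; split_ifs <;> first | omega | norm_num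
  simp_rw [h]
  rw [Finset.sum_add_distrib, Finset.sum_add_distrib, Finset.sum_add_distrib,
    Finset.sum_const, sum_point n 0 (by omega), sum_point n 1 (by omega),
    sum_point n 2 (by omega), Finset.card_univ, Fintype.card_fin]
  simp [nsmul_eq_mul]; ring

lemma sum_uvsq (n : ℕ) (hn : 4 ≤ n) : ∑ i, uvv n i * uvv n i = (n : KK) + 1 := by
  have h : ∀ i : Fin n, uvv n i * uvv n i = 1 + ((if (i:ℕ) = 0 then (-1:KK) else 0)
      + (if (i:ℕ) = 1 then (3:KK) else 0) + (if (i:ℕ) = 2 then (-1:KK) else 0)) := by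
    intro i; unfold uvv; split_ifs <;> first | omega | norm_num
  simp_rw [h]
  rw [Finset.sum_add_distrib, Finset.sum_add_distrib, Finset.sum_add_distrib,
    Finset.sum_const, sum_point n 0 (by omega), sum_point n 1 (by omega),
    sum_point n 2 (by omega), Finset.card_univ, Fintype.card_fin]
  simp [nsmul_eq_mul]; ring

lemma sum_e0 (n : ℕ) (hn : 4 ≤ n) : ∑ i, e0v n i = 1 :=
  sum_point n 0 (by omega) 1

lemma sum_e0sq (n : ℕ) (hn : 4 ≤ n) : ∑ i, e0v n i * e0v n i = 1 := by
  have h : ∀ i : Fin n, e0v n i * e0v n i = e0v n i := by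
    intro i; unfold e0v; split_ifs <;> norm_num
  simp_rw [h]; exact sum_e0 n hn

lemma sum_uv_e0 (n : ℕ) : ∑ i, uvv n i * e0v n i = 0 := by
  refine Finset.sum_eq_zero fun i _ => ?_
  unfold uvv e0v; split_ifs <;> first | omega | norm_num

lemma sum_e0_uv (n : ℕ) : ∑ i, e0v n i * uvv n i = 0 := by
  refine Finset.sum_eq_zero fun i _ => ?_
  unfold uvv e0v; split_ifs <;> first | omega | norm_num

lemma VU (n : ℕ) (hn : 4 ≤ n) :
    Vmat n * Umat n = !![(n : KK), 1 - n, 1; 1, 0, 1; 1 - n, n + 1, 0] := by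
  ext k l
  fin_cases k <;> fin_cases l <;>
    simp [mul_apply, Umat, Vmat, sum_uv n hn, sum_e0 n hn, sum_e0sq n hn,
      sum_uvsq n hn, sum_uv_e0 n, sum_e0_uv n]

set_option maxHeartbeats 1600000 in
lemma charmap (n : ℕ) (hn : 4 ≤ n) :
    (charmatrix (G1adj n)).map (algebraMap (Polynomial ℝ) KK) =
      (algebraMap (Polynomial ℝ) KK (X + 1)) • (1 : Matrix (Fin n) (Fin n) KK)
        - Umat n * Vmat n := by
  ext i j
  simp only [Matrix.map_apply, charmatrix_apply, Matrix.sub_apply, Matrix.smul_apply,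
    Matrix.one_apply, Matrix.diagonal_apply, mul_apply, Fin.sum_univ_three,
    Umat, Vmat, uvv, e0v, G1adj, Matrix.of_apply, Matrix.cons_val_zero,
    Matrix.cons_val_one, Matrix.head_cons, Matrix.cons_val_two, Matrix.tail_cons,
    smul_eq_mul]
  split_ifs <;>
    first
      | omega
      | (push_cast [map_add, map_sub, _root_.map_one, map_neg, map_zero,
          Polynomial.algebraMap_eq]; try ring_nf)

lemma detchain (n : ℕ) (U : Matrix (Fin n) (Fin 3) KK) (V : Matrix (Fin 3) (Fin n) KK)
    (y : KK) (hy : y ≠ 0) (h3 : 3 ≤ n) :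
    (y • (1 : Matrix (Fin n) (Fin n) KK) - U * V).det
      = y ^ (n - 3) * (y • (1 : Matrix (Fin 3) (Fin 3) KK) - V * U).det := by
  have h1 : y • (1 : Matrix (Fin n) (Fin n) KK) - U * V
      = y • (1 - (y⁻¹ • U) * V) := by
    rw [smul_sub, Matrix.smul_mul, smul_smul, mul_inv_cancel₀ hy, one_smul]
  have h2 : (1 : Matrix (Fin 3) (Fin 3) KK) - V * (y⁻¹ • U)
      = y⁻¹ • (y • (1 : Matrix (Fin 3) (Fin 3) KK) - V * U) := by
    rw [smul_sub, smul_smul, inv_mul_cancel₀ hy, one_smul, Matrix.mul_smul]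
  rw [h1, det_smul, Matrix.det_one_sub_mul_comm, h2, det_smul]
  simp only [Fintype.card_fin]
  have hpow : y ^ n = y ^ (n - 3) * y ^ 3 := by rw [← pow_add]; congr 1; omega
  rw [hpow]
  field_simp

lemma det3 (n : ℕ) (hn : 4 ≤ n) :
    ((algebraMap (Polynomial ℝ) KK (X + 1)) • (1 : Matrix (Fin 3) (Fin 3) KK)
        - Vmat n * Umat n).det
      = (algebraMap (Polynomial ℝ) KK X - ((n : KK) - 2))
          * (algebraMap (Polynomial ℝ) KK X - 1) * (algebraMap (Polynomial ℝ) KK X + 2) := by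
  rw [VU n hn, det_fin_three]
  simp [Matrix.one_apply, smul_eq_mul, map_add, _root_.map_one]
  ring

lemma spec_iff {n : ℕ} (M : Matrix (Fin n) (Fin n) ℝ) (μ : ℝ) :
    μ ∈ spectrum ℝ M ↔ M.charpoly.eval μ = 0 := by
  rw [spectrum.mem_iff]
  have hmat : (charmatrix M).map (evalRingHom μ) = algebraMap ℝ _ μ - M := by
    ext i j
    by_cases h : i = j
    · subst h
      simp [charmatrix_apply_eq, Matrix.algebraMap_eq_diagonal]
    · simp [charmatrix_apply_ne _ _ _ h, Matrix.algebraMap_eq_diagonal,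
        Matrix.diagonal_apply_ne _ h]
  have heval : M.charpoly.eval μ = (algebraMap ℝ _ μ - M).det := by
    rw [Matrix.charpoly, ← hmat]
    have := RingHom.map_det (evalRingHom μ) M.charmatrix
    simpa [RingHom.mapMatrix_apply] using this
  rw [heval, Matrix.isUnit_iff_isUnit_det, isUnit_iff_ne_zero, not_not]

lemma G1_charpoly (n : ℕ) (hn : 4 ≤ n) :
    (G1adj n).charpoly =
      (X - C ((n : ℝ) - 2)) * (X - C 1) * (X + C 2) * (X + C 1) ^ (n - 3) := by
  have hinj : Function.Injective (algebraMap (Polynomial ℝ) KK) :=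
    IsFractionRing.injective (Polynomial ℝ) KK
  apply hinj
  have hX1 : (X + 1 : Polynomial ℝ) ≠ 0 := by
    intro h; simpa using congrArg (eval 0) h
  have hy : algebraMap (Polynomial ℝ) KK (X + 1) ≠ 0 := fun h =>
    hX1 (hinj (by simpa using h))
  have lhs : algebraMap (Polynomial ℝ) KK (G1adj n).charpoly
      = algebraMap (Polynomial ℝ) KK (X + 1) ^ (n - 3)
        * ((algebraMap (Polynomial ℝ) KK X - ((n : KK) - 2))
          * (algebraMap (Polynomial ℝ) KK X - 1) * (algebraMap (Polynomial ℝ) KK X + 2)) := by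
    rw [Matrix.charpoly]
    have hdet := RingHom.map_det (algebraMap (Polynomial ℝ) KK) (charmatrix (G1adj n))
    rw [hdet, RingHom.mapMatrix_apply, charmap n hn,
      detchain n _ _ _ hy (by omega), det3 n hn]
  rw [lhs]
  simp only [_root_.map_mul, map_pow, map_sub, map_add, map_natCast, map_ofNat, _root_.map_one,
    Polynomial.C_eq_natCast]
  ring


/-- The signed graph `Ġ₁(0, n-3)` has largest eigenvalue exactly `n - 2`, and its
spectrum is `{n-2, 1, -2}` together with `-1` for all remaining eigenvalues: its
characteristic polynomial is `(X-(n-2))(X-1)(X+2)(X+1)^(n-3)`. -/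
theorem G1_spectrum (n : ℕ) (hn : 4 ≤ n) :
    ((n : ℝ) - 2) ∈ spectrum ℝ (G1adj n) ∧
      (∀ μ ∈ spectrum ℝ (G1adj n), μ ≤ (n : ℝ) - 2) ∧
      (G1adj n).charpoly =
        (X - C ((n : ℝ) - 2)) * (X - C 1) * (X + C 2) * (X + C 1) ^ (n - 3) := by
  have hcp := G1_charpoly n hn
  have h4 : (4 : ℝ) ≤ (n : ℝ) := by exact_mod_cast hn
  have heval : ∀ μ : ℝ, (G1adj n).charpoly.eval μ
      = (μ - ((n : ℝ) - 2)) * (μ - 1) * (μ + 2) * (μ + 1) ^ (n - 3) := by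
    intro μ; rw [hcp]; simp
  refine ⟨?_, ?_, hcp⟩
  · rw [spec_iff, heval]
    simp
  · intro μ hμ
    rw [spec_iff, heval] at hμ
    rcases mul_eq_zero.mp hμ with h | h
    · rcases mul_eq_zero.mp h with h | h
      · rcases mul_eq_zero.mp h with h | h
        · linarith [sub_eq_zero.mp h]
        · have := sub_eq_zero.mp h; linarith
      · have : μ = -2 := by linarith [eq_neg_of_add_eq_zero_left h]
        linarith
    · have hμ1 : μ + 1 = 0 := by
        have hne : n - 3 ≠ 0 := by omega
        exact pow_eq_zero_iff hne |>.mp h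
      have : μ = -1 := by linarith
      linarith
end
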